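/- arXiv:2412.05567 — 2 statements merged into one kernel-verified Lean document; each statement's English description precedes it below -/
import Mathlib

section
/- Suppose f is an infinitely renormalizable contracting Lorenz map with bounded geometry, i.e. there exists μ₀ ∈ (0,1) such that for every n, every interval J of generation n+1 contained in an interval I of generation n satisfies |J|/|I| > μ₀. Then f has bounded combinatorics: the renormalization types ω_n = (ω_n^−, ω_n^+) satisfy |ω_n^−| + |ω_n^+| ≤ 2/μ₀ + 1 for all n. -/
open MeasureTheory

lemma half_card_bound (μ₀ : ℝ) (hμ : 0 < μ₀) (C : Set ℝ)
    (hCfin : volume C ≠ ⊤) (s : Finset ℕ) (J : ℕ → Set ℝ)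
    (hJmeas : ∀ k, MeasurableSet (J k))
    (hdisj : (↑s : Set ℕ).PairwiseDisjoint J)
    (hsub : ∀ k ∈ s, J k ⊆ C)
    (hlen : ∀ k ∈ s, ENNReal.ofReal μ₀ * volume C < volume (J k)) :
    (s.card : ℝ) * μ₀ ≤ 1 := by
  rcases s.eq_empty_or_nonempty with hs | hs
  · simp [hs]
  · obtain ⟨k0, hk0⟩ := hs
    have hVpos : 0 < volume C := by
      by_contra h
      push_neg at h
      have h0 : volume C = 0 := le_antisymm h bot_le
      have := hlen k0 hk0
      rw [h0, mul_zero] at this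
      have hle : volume (J k0) ≤ volume C := measure_mono (hsub k0 hk0)
      rw [h0] at hle
      exact absurd (lt_of_lt_of_le this hle) (lt_irrefl 0)
    have hsum : ∑ k ∈ s, volume (J k) ≤ volume C := by
      rw [← measure_biUnion_finset hdisj (fun k _ => hJmeas k)]
      exact measure_mono (Set.iUnion₂_subset hsub)
    have hlt : s.card • (ENNReal.ofReal μ₀ * volume C) ≤ ∑ k ∈ s, volume (J k) :=
      Finset.card_nsmul_le_sum s _ _ (fun k hk => le_of_lt (hlen k hk))
    rw [nsmul_eq_mul] at hlt
    have hlt2 : (s.card : ENNReal) * ENNReal.ofReal μ₀ * volume C ≤ 1 * volume C := by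
      rw [one_mul, mul_assoc]
      exact le_trans hlt hsum
    have hlt3 : (s.card : ENNReal) * ENNReal.ofReal μ₀ ≤ 1 :=
      (ENNReal.mul_le_mul_iff_left (ne_of_gt hVpos) hCfin).mp hlt2
    have : ENNReal.ofReal ((s.card : ℝ) * μ₀) ≤ 1 := by
      rwa [ENNReal.ofReal_mul (by positivity), ENNReal.ofReal_natCast]
    exact ENNReal.ofReal_le_one.mp this

/-- bounded geometry implies bounded combinatorics. For each `n`,
the renormalization interval `C n` is split into the two halves `Cm n`, `Cp n`,
and there are `a n + b n - 1` pairwise disjoint intervals of generation `n+1`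
inside `C n`, each contained in one of the halves and occupying a proportion
greater than `μ₀` of it. Then `a n + b n ≤ 2/μ₀ + 1`. -/
theorem bounded_geometry_implies_bounded_combinatorics
    (μ₀ : ℝ) (hμ₀ : μ₀ ∈ Set.Ioo (0:ℝ) 1) (a b : ℕ → ℕ)
    (ha : ∀ n, 1 ≤ a n) (hb : ∀ n, 1 ≤ b n)
    (Cm Cp : ℕ → Set ℝ) (J : ℕ → ℕ → Set ℝ)
    (hCmeas : ∀ n, MeasurableSet (Cm n) ∧ MeasurableSet (Cp n))
    (hCfin : ∀ n, volume (Cm n) ≠ ⊤ ∧ volume (Cp n) ≠ ⊤)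
    (hJmeas : ∀ n k, MeasurableSet (J n k))
    (hhalves : ∀ n, Disjoint (Cm n) (Cp n))
    (hJdisj : ∀ n, ∀ k < a n + b n - 1, ∀ l < a n + b n - 1, k ≠ l →
      Disjoint (J n k) (J n l))
    (hJsub : ∀ n, ∀ k < a n + b n - 1, J n k ⊆ Cm n ∨ J n k ⊆ Cp n)
    (hJlen : ∀ n, ∀ k < a n + b n - 1,
      (J n k ⊆ Cm n → ENNReal.ofReal μ₀ * volume (Cm n) < volume (J n k)) ∧
      (J n k ⊆ Cp n → ENNReal.ofReal μ₀ * volume (Cp n) < volume (J n k))) :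
    ∀ n, ((a n + b n : ℕ) : ℝ) ≤ 2 / μ₀ + 1 := by
  classical
  intro n
  obtain ⟨hμ0, hμ1⟩ := hμ₀
  set N := a n + b n - 1 with hNdef
  set sm : Finset ℕ := (Finset.range N).filter (fun k => J n k ⊆ Cm n) with hsm
  set sp : Finset ℕ := (Finset.range N).filter (fun k => ¬ (J n k ⊆ Cm n)) with hsp
  have hmemm : ∀ k ∈ sm, k < N := fun k hk =>
    Finset.mem_range.mp (Finset.mem_filter.mp hk).1
  have hmemp : ∀ k ∈ sp, k < N := fun k hk =>
    Finset.mem_range.mp (Finset.mem_filter.mp hk).1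
  have hsubp : ∀ k ∈ sp, J n k ⊆ Cp n := by
    intro k hk
    rcases hJsub n k (hmemp k hk) with h | h
    · exact absurd h (Finset.mem_filter.mp hk).2
    · exact h
  have hdm : (↑sm : Set ℕ).PairwiseDisjoint (J n) := by
    intro k hk l hl hkl
    exact hJdisj n k (hmemm k hk) l (hmemm l hl) hkl
  have hdp : (↑sp : Set ℕ).PairwiseDisjoint (J n) := by
    intro k hk l hl hkl
    exact hJdisj n k (hmemp k hk) l (hmemp l hl) hkl
  have h1 : (sm.card : ℝ) * μ₀ ≤ 1 :=
    half_card_bound μ₀ hμ0 (Cm n) (hCfin n).1 sm (J n) (hJmeas n) hdm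
      (fun k hk => (Finset.mem_filter.mp hk).2)
      (fun k hk => (hJlen n k (hmemm k hk)).1 (Finset.mem_filter.mp hk).2)
  have h2 : (sp.card : ℝ) * μ₀ ≤ 1 :=
    half_card_bound μ₀ hμ0 (Cp n) (hCfin n).2 sp (J n) (hJmeas n) hdp hsubp
      (fun k hk => (hJlen n k (hmemp k hk)).2 (hsubp k hk))
  have hcard : sm.card + sp.card = N := by
    rw [hsm, hsp, Finset.card_filter_add_card_filter_not, Finset.card_range]
  have hNμ : (N : ℝ) * μ₀ ≤ 2 := by
    have : ((sm.card + sp.card : ℕ) : ℝ) * μ₀ ≤ 2 := by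
      push_cast
      nlinarith
    rwa [hcard] at this
  have hN1 : a n + b n = N + 1 := by
    have := ha n; have := hb n; omega
  have : (N : ℝ) ≤ 2 / μ₀ := (le_div_iff₀ hμ0).mpr hNμ
  rw [hN1]
  push_cast
  linarith
end

section
/- Let f : X → X, c ∈ X, and x ∈ X. Suppose there exist nested sets C₁ ⊇ C₂ ⊇ … containing punctured neighborhoods of c, positive integers S_k ≥ 2^k, and constants C₁' > 0, ρ ∈ (0,1) such that: (a) for every k and every n, #{0 ≤ i < n : f^i(x) ∈ C_k} ≤ (n+1)/S_k; (b) every point of C_k \ C_{k+1} has distance at least C₁'·ρ^{k+1} from c; (c) for every δ > 0 small there is k₀(δ) with 𝒞_δ := {y : 0 < |y − c| < δ} ⊆ C_{k₀(δ)}, and k₀(δ) → ∞ as δ → 0. Then x satisfies the slow recurrence condition to c: lim_{δ→0} limsup_{n→∞} (1/n) Σ_{0 ≤ i < n, f^i(x) ∈ 𝒞_δ} (−log |f^i(x) − c|) = 0. -/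
/-!
Write `L = log ρ⁻¹`. A point `y` of the shell `C k \ C (k + 1)` satisfies
`-log dist(y, c) ≤ -log C₁' + (k + 1) L`, and `k + 1` is the number of levels `C j` containing
`y`. The counting bound forces the orbit up to time `n` to stay outside `C (n + 1)`, so along
the orbit `-log dist(fⁱx, c)` is controlled by the levels `j ≤ n`. If `𝒞_δ ⊆ C m`, the levels
`j ≤ m` contribute `O(m)` per visit to `C m`, and the level `j > m` is visited with frequency
at most `2⁻ʲ`, so the Birkhoff averages are at most `2 · 2⁻ᵐ (|log C₁'| + (m + 2) L)`,
which tends to `0` as `m → ∞`.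
-/

open Filter Finset Topology

namespace SlowRecurrence

section Levels

variable {α : Type*} {s : ℕ → Set α} {y : α}

theorem exists_le_mem_sdiff_succ {n : ℕ} (h0 : y ∈ s 0) (hn : y ∉ s (n + 1)) :
    ∃ k ≤ n, y ∈ s k \ s (k + 1) := by
  induction n with
  | zero => exact ⟨0, le_rfl, h0, hn⟩
  | succ n ih =>
    by_cases hy : y ∈ s (n + 1)
    · exact ⟨n + 1, le_rfl, hy, hn⟩
    · obtain ⟨k, hk, hks⟩ := ih hy
      exact ⟨k, hk.trans n.le_succ, hks⟩

theorem sum_range_indicator_eq_of_mem_sdiff (hs : Antitone s) {k n : ℕ}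
    (hy : y ∈ s k \ s (k + 1)) (hkn : k ≤ n) :
    ∑ j ∈ range (n + 1), (s j).indicator 1 y = (k + 1 : ℝ) := by
  rw [← sum_range_add_sum_Ico _ (Nat.succ_le_succ hkn),
    sum_congr rfl fun j hj => Set.indicator_of_mem (hs (mem_range_succ_iff.1 hj) hy.1) 1,
    sum_congr rfl fun j hj => Set.indicator_of_notMem
      (fun h => hy.2 (hs (mem_Ico.1 hj).1 h)) 1]
  simp

end Levels

section Visits

variable {α : Type*} (u : ℕ → α)

theorem ncard_setOf_lt_and_mem_eq_sum_indicator (s : Set α) (n : ℕ) :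
    (Set.ncard {i | i < n ∧ u i ∈ s} : ℝ) = ∑ i ∈ range n, s.indicator 1 (u i) := by
  classical
  have : {i | i < n ∧ u i ∈ s} = ((range n).filter (u · ∈ s) : Set ℕ) := by
    ext i; simp
  rw [this, Set.ncard_coe_finset, ← sum_boole]
  simp only [Set.indicator_apply, Pi.one_apply]

theorem sum_indicator_le_of_ncard_le {C : ℕ → Set α} {S : ℕ → ℕ} (hS : ∀ k, 2 ^ k ≤ S k)
    (hcount : ∀ k n : ℕ,
      (Set.ncard {i : ℕ | i < n ∧ u i ∈ C k} : ℝ) ≤ ((n : ℝ) + 1) / (S k : ℝ))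
    (k n : ℕ) : ∑ i ∈ range n, (C k).indicator 1 (u i) ≤ ((n : ℝ) + 1) * 2⁻¹ ^ k := by
  have hSk : (2 : ℝ) ^ k ≤ S k := by exact_mod_cast hS k
  calc ∑ i ∈ range n, (C k).indicator 1 (u i) ≤ ((n : ℝ) + 1) / (S k : ℝ) := by
        rw [← ncard_setOf_lt_and_mem_eq_sum_indicator]; exact hcount k n
    _ ≤ ((n : ℝ) + 1) / 2 ^ k := by gcongr
    _ = ((n : ℝ) + 1) * 2⁻¹ ^ k := by rw [inv_pow, div_eq_mul_inv]

theorem notMem_of_lt {C : ℕ → Set α}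
    (hvisit : ∀ k n : ℕ, ∑ i ∈ range n, (C k).indicator 1 (u i) ≤ ((n : ℝ) + 1) * 2⁻¹ ^ k)
    {i n : ℕ} (hi : i < n) : u i ∉ C (n + 1) := by
  intro hmem
  have hone : (1 : ℝ) ≤ ∑ i' ∈ range (i + 1), (C (n + 1)).indicator 1 (u i') :=
    calc (1 : ℝ) = (C (n + 1)).indicator 1 (u i) := (Set.indicator_of_mem hmem 1).symm
      _ ≤ _ := single_le_sum (f := fun i' => (C (n + 1)).indicator 1 (u i'))
          (fun _ _ => Set.indicator_nonneg (fun _ _ => zero_le_one) _) (self_mem_range_succ i)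
  have hvisit' := hone.trans (hvisit (n + 1) (i + 1))
  rw [inv_pow, ← div_eq_mul_inv, le_div_iff₀ (by positivity)] at hvisit'
  have hi' : ((i + 1 : ℕ) : ℝ) + 1 ≤ n + 1 := by exact_mod_cast Nat.succ_le_succ hi
  have hpow : ((n : ℝ) + 1) < 2 ^ (n + 1) := by exact_mod_cast (n + 1).lt_two_pow_self
  linarith

end Visits

theorem neg_log_le_of_mul_pow_le {a ρ d : ℝ} (ha : 0 < a) (hρ : 0 < ρ) {k : ℕ}
    (h : a * ρ ^ k ≤ d) : -Real.log d ≤ -Real.log a + k * Real.log ρ⁻¹ := by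
  have := Real.log_le_log (by positivity) h
  rw [Real.log_mul ha.ne' (by positivity), Real.log_pow] at this
  rw [Real.log_inv]
  linarith

theorem log_inv_nonneg {ρ : ℝ} (hρ : ρ ∈ Set.Ioo 0 1) : 0 ≤ Real.log ρ⁻¹ :=
  Real.log_nonneg (one_le_inv₀ hρ.1 |>.2 hρ.2.le)

section Shells

variable {X : Type*} [MetricSpace X] {C : ℕ → Set X} {c : X} {C₁' ρ : ℝ}

theorem neg_log_dist_le_sum_indicator (hC : Antitone C) (hC₁' : 0 < C₁') (hρ : 0 < ρ)
    (hdist : ∀ k, ∀ y ∈ C k \ C (k + 1), C₁' * ρ ^ (k + 1) ≤ dist y c)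
    {y : X} {n : ℕ} (h0 : y ∈ C 0) (hn : y ∉ C (n + 1)) :
    -Real.log (dist y c) ≤
      -Real.log C₁' + Real.log ρ⁻¹ * ∑ j ∈ range (n + 1), (C j).indicator 1 y := by
  obtain ⟨k, hkn, hk⟩ := exists_le_mem_sdiff_succ h0 hn
  rw [sum_range_indicator_eq_of_mem_sdiff hC hk hkn, mul_comm]
  exact_mod_cast neg_log_le_of_mul_pow_le hC₁' hρ (hdist k y hk)

theorem indicator_neg_log_dist_le (hC : Antitone C) (hC₁' : 0 < C₁') (hρ : ρ ∈ Set.Ioo 0 1)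
    (hdist : ∀ k, ∀ y ∈ C k \ C (k + 1), C₁' * ρ ^ (k + 1) ≤ dist y c)
    {U : Set X} {m n : ℕ} (hU : U ⊆ C m) {y : X} (hn : y ∉ C (n + 1)) :
    U.indicator (fun y => -Real.log (dist y c)) y ≤
      (|Real.log C₁'| + (m + 1) * Real.log ρ⁻¹) * (C m).indicator 1 y +
        Real.log ρ⁻¹ * ∑ j ∈ Ico (m + 1) (n + 1), (C j).indicator 1 y := by
  have hL := log_inv_nonneg hρ
  by_cases hy : y ∈ U
  · have hym := hU hy
    have hmn : m ≤ n := by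
      by_contra! h
      exact hn (hC h hym)
    have hlow : ∑ j ∈ range (m + 1), (C j).indicator (1 : X → ℝ) y = m + 1 := by
      rw [sum_congr rfl fun j hj => Set.indicator_of_mem (hC (mem_range_succ_iff.1 hj) hym) 1]
      simp
    have h := neg_log_dist_le_sum_indicator hC hC₁' hρ.1 hdist (hC m.zero_le hym) hn
    rw [← sum_range_add_sum_Ico _ (Nat.succ_le_succ hmn), hlow] at h
    rw [Set.indicator_of_mem hy, Set.indicator_of_mem hym, Pi.one_apply, mul_one]
    linarith [neg_le_abs (Real.log C₁')]
  · rw [Set.indicator_of_notMem hy]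
    have hA : 0 ≤ |Real.log C₁'| + (m + 1) * Real.log ρ⁻¹ := by positivity
    have hind : ∀ j, 0 ≤ (C j).indicator (1 : X → ℝ) y :=
      fun j => Set.indicator_nonneg (fun _ _ => zero_le_one) _
    exact add_nonneg (mul_nonneg hA (hind m)) (mul_nonneg hL (sum_nonneg fun j _ => hind j))

theorem sum_indicator_neg_log_dist_le (hC : Antitone C) (hC₁' : 0 < C₁') (hρ : ρ ∈ Set.Ioo 0 1)
    (hdist : ∀ k, ∀ y ∈ C k \ C (k + 1), C₁' * ρ ^ (k + 1) ≤ dist y c) (u : ℕ → X)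
    (hvisit : ∀ k n : ℕ, ∑ i ∈ range n, (C k).indicator 1 (u i) ≤ ((n : ℝ) + 1) * 2⁻¹ ^ k)
    {U : Set X} {m : ℕ} (hU : U ⊆ C m) (n : ℕ) :
    ∑ i ∈ range n, U.indicator (fun y => -Real.log (dist y c)) (u i) ≤
      (n + 1) * (2⁻¹ ^ m * (|Real.log C₁'| + (m + 2) * Real.log ρ⁻¹)) := by
  set L := Real.log ρ⁻¹
  set A := |Real.log C₁'| + (m + 1) * L
  have hL : 0 ≤ L := log_inv_nonneg hρ
  have hA : 0 ≤ A := by positivity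
  have htail : ∑ j ∈ Ico (m + 1) (n + 1), (2⁻¹ : ℝ) ^ j ≤ 2⁻¹ ^ m :=
    (geom_sum_Ico_le_of_lt_one (by norm_num) (by norm_num)).trans_eq (by ring)
  calc ∑ i ∈ range n, U.indicator (fun y => -Real.log (dist y c)) (u i)
      ≤ ∑ i ∈ range n, (A * (C m).indicator 1 (u i) +
          L * ∑ j ∈ Ico (m + 1) (n + 1), (C j).indicator 1 (u i)) :=
        sum_le_sum fun i hi => indicator_neg_log_dist_le hC hC₁' hρ hdist hU
          (notMem_of_lt u hvisit (mem_range.1 hi))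
    _ = A * ∑ i ∈ range n, (C m).indicator 1 (u i) +
          L * ∑ j ∈ Ico (m + 1) (n + 1), ∑ i ∈ range n, (C j).indicator 1 (u i) := by
        rw [sum_add_distrib, ← mul_sum, ← mul_sum, sum_comm]
    _ ≤ A * ((n + 1) * 2⁻¹ ^ m) + L * ∑ j ∈ Ico (m + 1) (n + 1), ((n : ℝ) + 1) * 2⁻¹ ^ j := by
        gcongr with j
        · exact hvisit m n
        · exact hvisit j n
    _ ≤ A * ((n + 1) * 2⁻¹ ^ m) + L * ((n + 1) * 2⁻¹ ^ m) := by
        rw [← mul_sum]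
        gcongr
    _ = (n + 1) * (2⁻¹ ^ m * (|Real.log C₁'| + (m + 2) * L)) := by ring

end Shells

theorem one_div_mul_sum_le_two_mul {g : ℕ → ℝ} {b : ℝ} {n : ℕ} (hb : 0 ≤ b)
    (h : ∑ i ∈ range n, g i ≤ (n + 1) * b) : 1 / (n : ℝ) * ∑ i ∈ range n, g i ≤ 2 * b := by
  rcases n.eq_zero_or_pos with rfl | hn
  · simpa using hb
  have hn' : (1 : ℝ) ≤ n := by exact_mod_cast hn
  rw [one_div_mul_eq_div, div_le_iff₀ (by positivity)]
  nlinarith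

theorem limsup_mem_Icc {ι : Type*} {l : Filter ι} [l.NeBot] {a : ι → ℝ} {b : ℝ}
    (h : ∀ i, a i ∈ Set.Icc 0 b) : l.limsup a ∈ Set.Icc 0 b :=
  ⟨le_limsup_of_frequently_le (.of_forall fun i => (h i).1)
      (isBoundedUnder_of ⟨b, fun i => (h i).2⟩),
    limsup_le_of_le (isCoboundedUnder_le_of_le l fun i => (h i).1) (.of_forall fun i => (h i).2)⟩

theorem tendsto_nhds_zero_of_forall_eventually_mem_Icc {ι : Type*} {l : Filter ι}
    {F : ι → ℝ} {E : ℕ → ℝ} (hE : Tendsto E atTop (𝓝 0))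
    (hF : ∀ m, ∀ᶠ a in l, F a ∈ Set.Icc 0 (E m)) : Tendsto F l (𝓝 0) := by
  refine tendsto_order.2 ⟨fun b hb => (hF 0).mono fun a ha => hb.trans_le ha.1, fun b hb => ?_⟩
  obtain ⟨m, hm⟩ := (hE.eventually (gt_mem_nhds hb)).exists
  exact (hF m).mono fun a ha => ha.2.trans_lt hm

theorem tendsto_two_mul_inv_two_pow_mul (a L : ℝ) :
    Tendsto (fun m : ℕ => 2 * (2⁻¹ ^ m * (a + (m + 2) * L))) atTop (𝓝 0) := by
  have hgeom := tendsto_pow_atTop_nhds_zero_of_lt_one (r := (2⁻¹ : ℝ)) (by norm_num) (by norm_num)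
  have hlin := tendsto_self_mul_const_pow_of_lt_one (r := (2⁻¹ : ℝ)) (by norm_num) (by norm_num)
  convert (hgeom.const_mul (2 * (a + 2 * L))).add (hlin.const_mul (2 * L)) using 1
  · ext m; ring
  · simp

end SlowRecurrence

open SlowRecurrence

/-- abstract slow recurrence. Under (a) the counting bound
`#{i < n : f^i x ∈ C k} ≤ (n+1)/S k` with `S k ≥ 2^k`, (b) points of
`C k \ C (k+1)` are at distance at least `C₁' ρ^(k+1)` from `c`, and (c) every
punctured `δ`-neighborhood of `c` is contained in some `C k₀` with arbitrarily
large `k₀`, the point `x` satisfies the slow recurrence condition to `c`. -/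
theorem abstract_slow_recurrence {X : Type*} [MetricSpace X]
    (f : X → X) (c x : X) (C : ℕ → Set X)
    (hnest : ∀ k, C (k + 1) ⊆ C k)
    (S : ℕ → ℕ) (hS : ∀ k, 2 ^ k ≤ S k)
    (C₁' ρ : ℝ) (hC₁' : 0 < C₁') (hρ : ρ ∈ Set.Ioo (0:ℝ) 1)
    (hcount : ∀ k n : ℕ,
      ((Set.ncard {i : ℕ | i < n ∧ f^[i] x ∈ C k} : ℝ)) ≤ ((n : ℝ) + 1) / (S k : ℝ))
    (hdist : ∀ k, ∀ y ∈ C k \ C (k + 1), C₁' * ρ ^ (k + 1) ≤ dist y c)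
    (hnbhd : ∀ m : ℕ, ∃ δ : ℝ, 0 < δ ∧
      {y : X | 0 < dist y c ∧ dist y c < δ} ⊆ C m) :
    Tendsto (fun δ : ℝ =>
        atTop.limsup (fun n : ℕ =>
          (1 / (n : ℝ)) * ∑ i ∈ Finset.range n,
            Set.indicator {y : X | 0 < dist y c ∧ dist y c < δ}
              (fun y => -Real.log (dist y c)) (f^[i] x)))
      (nhdsWithin 0 (Set.Ioi 0)) (nhds 0) := by
  have hC : Antitone C := antitone_nat_of_succ_le hnest
  have hvisit := sum_indicator_le_of_ncard_le (fun i => f^[i] x) hS hcount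
  refine tendsto_nhds_zero_of_forall_eventually_mem_Icc
    (tendsto_two_mul_inv_two_pow_mul |Real.log C₁'| (Real.log ρ⁻¹)) fun m => ?_
  obtain ⟨δ₀, hδ₀, hsub⟩ := hnbhd m
  filter_upwards [Ioo_mem_nhdsGT (lt_min hδ₀ one_pos)] with δ ⟨_, hδ'⟩
  have hU : {y : X | 0 < dist y c ∧ dist y c < δ} ⊆ C m :=
    fun y hy => hsub ⟨hy.1, hy.2.trans (hδ'.trans_le (min_le_left _ _))⟩
  refine limsup_mem_Icc fun n => ⟨?_, ?_⟩
  · refine mul_nonneg (by positivity) (sum_nonneg fun i _ => Set.indicator_nonneg ?_ _)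
    exact fun y hy => neg_nonneg.2 (Real.log_nonpos dist_nonneg
      (hy.2.trans (hδ'.trans_le (min_le_right _ _))).le)
  · have hL := log_inv_nonneg hρ
    exact one_div_mul_sum_le_two_mul (by positivity)
      (sum_indicator_neg_log_dist_le hC hC₁' hρ hdist _ hvisit hU n)
end
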